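/- For any two well-founded extensional APGs X and Y with carriers in Type u, there exists a well-founded extensional APG Z with carrier in Type u such that for every well-founded extensional APG W with carrier in Type u, W ⋲ Z holds if and only if W is isomorphic (as an APG) to X or W is isomorphic to Y. (The pairing axiom holds in the class of well-founded extensional APGs.) -/

import Mathlib

universe u

/-- An accessible pointed graph (APG): a type with a binary relation and a root from
which every node is reachable (backwards along `Relation.ReflTransGen`). -/
structure APG : Type (u + 1) where
  carrier : Type u
  rel : carrier → carrier → Prop
  pt : carrier
  acc : ∀ z : carrier, Relation.ReflTransGen rel z pt

/-- An APG is well-founded if its relation is. -/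
def APG.WF (X : APG.{u}) : Prop := WellFounded X.rel

/-- An APG is extensional if its relation is. -/
def APG.Ext (X : APG.{u}) : Prop :=
  ∀ x y : X.carrier, (∀ z, X.rel z x ↔ X.rel z y) → x = y

/-- Isomorphism of APGs: a relation isomorphism preserving the root. -/
def APG.Iso (X Y : APG.{u}) : Prop :=
  ∃ e : X.rel ≃r Y.rel, e X.pt = Y.pt

private theorem APG.slice_acc {α : Type u} (r : α → α → Prop) (y : α)
    (z : {w : α // Relation.ReflTransGen r w y}) :
    Relation.ReflTransGen (fun a b : {w : α // Relation.ReflTransGen r w y} => r a.1 b.1)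
      z ⟨y, Relation.ReflTransGen.refl⟩ := by
  obtain ⟨a, h⟩ := z
  induction h using Relation.ReflTransGen.head_induction_on with
  | refl => exact Relation.ReflTransGen.refl
  | head h' h ih => exact Relation.ReflTransGen.head h' ih

/-- The sub-APG of `Y` determined by a node `y`: the nodes admitting a path to `y`,
rooted at `y`. -/
def APG.slice (Y : APG.{u}) (y : Y.carrier) : APG.{u} where
  carrier := {z : Y.carrier // Relation.ReflTransGen Y.rel z y}
  rel a b := Y.rel a.1 b.1
  pt := ⟨y, Relation.ReflTransGen.refl⟩
  acc z := APG.slice_acc Y.rel y z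

/-- Membership of APGs: `X ⋲ Y` iff `X` is isomorphic to `Y.slice y` for some member
(child of the root) `y` of `Y`. -/
def APG.Mem (X Y : APG.{u}) : Prop :=
  ∃ y : Y.carrier, Y.rel y Y.pt ∧ APG.Iso X (Y.slice y)

/-!
A well-founded APG `X` is decorated by ZF sets through Mostowski's recursion
`d a = {d b | X.rel b a}`. When `X` is also extensional, `d` is injective, two such APGs are
isomorphic iff their roots have the same decoration, and `W ⋲ Z` iff `d W.pt ∈ d Z.pt`.
Pairing thus reduces to realising the set `{d X.pt, d Y.pt}` by a well-founded extensional
APG: put `X` and `Y` side by side under a new root and identify nodes with equal decoration.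
-/
namespace APG

open Relation

section Decoration

variable (X : APG.{u}) (hX : X.WF)

noncomputable def decoration : X.carrier → ZFSet.{u} :=
  hX.fix fun a ih => ZFSet.range fun b : {b // X.rel b a} => ih b.1 b.2

variable {X}

theorem mem_decoration {a : X.carrier} {w : ZFSet.{u}} :
    w ∈ X.decoration hX a ↔ ∃ b, X.rel b a ∧ X.decoration hX b = w := by
  rw [decoration, hX.fix_eq, ZFSet.mem_range]
  exact ⟨fun ⟨b, hb⟩ => ⟨b.1, b.2, hb⟩, fun ⟨b, hab, hb⟩ => ⟨⟨b, hab⟩, hb⟩⟩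

theorem decoration_mem_decoration {a b : X.carrier} (h : X.rel a b) :
    X.decoration hX a ∈ X.decoration hX b :=
  (mem_decoration hX).2 ⟨a, h, rfl⟩

theorem decoration_injective (hXe : X.Ext) : Function.Injective (X.decoration hX) := by
  intro a
  induction a using hX.induction with
  | _ a ih =>
    intro b hab
    refine hXe a b fun z => ⟨fun hz => ?_, fun hz => ?_⟩
    · obtain ⟨z', hz', hzz'⟩ := (mem_decoration hX).1 (hab ▸ decoration_mem_decoration hX hz)
      rwa [ih z hz hzz'.symm]
    · obtain ⟨z', hz', hzz'⟩ := (mem_decoration hX).1 (hab ▸ decoration_mem_decoration hX hz)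
      rwa [← ih z' hz' hzz']

theorem rel_iff_decoration_mem (hXe : X.Ext) {a b : X.carrier} :
    X.rel a b ↔ X.decoration hX a ∈ X.decoration hX b := by
  refine ⟨decoration_mem_decoration hX, fun h => ?_⟩
  obtain ⟨a', ha', he⟩ := (mem_decoration hX).1 h
  rwa [← decoration_injective hX hXe he]

theorem range_decoration :
    Set.range (X.decoration hX) = {w | ReflTransGen (· ∈ ·) w (X.decoration hX X.pt)} := by
  ext w
  constructor
  · rintro ⟨a, rfl⟩
    exact (X.acc a).lift (p := (· ∈ ·)) (X.decoration hX) fun _ _ h =>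
      decoration_mem_decoration hX h
  · intro hw
    induction hw using ReflTransGen.head_induction_on with
    | refl => exact ⟨X.pt, rfl⟩
    | head hmem _ ih =>
      obtain ⟨a, rfl⟩ := ih
      obtain ⟨b, -, rfl⟩ := (mem_decoration hX).1 hmem
      exact ⟨b, rfl⟩

end Decoration

theorem decoration_relIso {X Y : APG.{u}} (hXw : X.WF) (hYw : Y.WF) (e : X.rel ≃r Y.rel)
    (a : X.carrier) : Y.decoration hYw (e a) = X.decoration hXw a := by
  induction a using hXw.induction with
  | _ a ih =>
    ext w
    simp only [mem_decoration]
    constructor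
    · rintro ⟨b, hb, rfl⟩
      obtain ⟨b, rfl⟩ := e.surjective b
      have hb := e.map_rel_iff.1 hb
      exact ⟨b, hb, (ih b hb).symm⟩
    · rintro ⟨b, hb, rfl⟩
      exact ⟨e b, e.map_rel_iff.2 hb, ih b hb⟩

theorem iso_iff_decoration_pt_eq {X Y : APG.{u}} (hXw : X.WF) (hXe : X.Ext) (hYw : Y.WF)
    (hYe : Y.Ext) : X.Iso Y ↔ X.decoration hXw X.pt = Y.decoration hYw Y.pt := by
  constructor
  · rintro ⟨e, he⟩
    rw [← he, decoration_relIso hXw hYw]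
  · intro h
    have hrange : Set.range (X.decoration hXw) = Set.range (Y.decoration hYw) := by
      rw [range_decoration, range_decoration, h]
    let e : X.carrier ≃ Y.carrier :=
      (Equiv.ofInjective _ (decoration_injective hXw hXe)).trans
        ((Equiv.setCongr hrange).trans (Equiv.ofInjective _ (decoration_injective hYw hYe)).symm)
    have he : ∀ a, Y.decoration hYw (e a) = X.decoration hXw a := fun a =>
      Equiv.apply_ofInjective_symm (decoration_injective hYw hYe) _
    refine ⟨⟨e, ?_⟩, decoration_injective hYw hYe ((he X.pt).trans h)⟩
    intro a b
    rw [rel_iff_decoration_mem hYw hYe, rel_iff_decoration_mem hXw hXe, he, he]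

section Slice

variable {Y : APG.{u}}

theorem WF.slice (hY : Y.WF) (y : Y.carrier) : (Y.slice y).WF :=
  InvImage.wf Subtype.val hY

theorem Ext.slice (hYe : Y.Ext) (y : Y.carrier) : (Y.slice y).Ext := fun a b h =>
  Subtype.ext <| hYe a.1 b.1 fun z =>
    ⟨fun hz => h ⟨z, .head hz a.2⟩ |>.1 hz, fun hz => h ⟨z, .head hz b.2⟩ |>.2 hz⟩

theorem decoration_slice (hY : Y.WF) {y : Y.carrier} (z : (Y.slice y).carrier) :
    (Y.slice y).decoration (hY.slice y) z = Y.decoration hY z.1 := by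
  induction z using (hY.slice y).induction with
  | _ z ih =>
    ext w
    simp only [mem_decoration]
    constructor
    · rintro ⟨c, hc, rfl⟩
      exact ⟨c.1, hc, (ih c hc).symm⟩
    · rintro ⟨c, hc, rfl⟩
      exact ⟨⟨c, .head hc z.2⟩, hc, ih _ hc⟩

end Slice

theorem mem_iff_decoration_mem {W Z : APG.{u}} (hWw : W.WF) (hWe : W.Ext) (hZw : Z.WF)
    (hZe : Z.Ext) : W.Mem Z ↔ W.decoration hWw W.pt ∈ Z.decoration hZw Z.pt := by
  rw [APG.Mem, mem_decoration]
  refine exists_congr fun z => and_congr_right fun _ => ?_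
  rw [iso_iff_decoration_pt_eq hWw hWe (hZw.slice z) (hZe.slice z), decoration_slice hZw]
  exact eq_comm

section OfDecoration

variable {α : Type u} (d : α → ZFSet.{u})

def ofDecoration (root : α) (hacc : ∀ a, ReflTransGen (fun a b => d a ∈ d b) a root) :
    APG.{u} where
  carrier := Quotient (Setoid.ker d)
  rel p q := Setoid.kerLift d p ∈ Setoid.kerLift d q
  pt := ⟦root⟧
  acc := Quotient.ind fun a => (hacc a).lift (Quotient.mk _) fun _ _ h => h

variable {d} {root : α} {hacc : ∀ a, ReflTransGen (fun a b => d a ∈ d b) a root}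

theorem ofDecoration_wf : (ofDecoration d root hacc).WF :=
  InvImage.wf (Setoid.kerLift d) ZFSet.mem_wf

theorem exists_kerLift_eq_of_mem (hd : ∀ a, ∀ w ∈ d a, ∃ b, d b = w)
    (p : Quotient (Setoid.ker d)) {w : ZFSet.{u}} (hw : w ∈ Setoid.kerLift d p) :
    ∃ q, Setoid.kerLift d q = w := by
  induction p using Quotient.ind with
  | _ a =>
    obtain ⟨b, rfl⟩ := hd a w hw
    exact ⟨⟦b⟧, rfl⟩

theorem ofDecoration_ext (hd : ∀ a, ∀ w ∈ d a, ∃ b, d b = w) :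
    (ofDecoration d root hacc).Ext := by
  intro p q h
  refine Setoid.kerLift_injective d (ZFSet.ext fun w => ⟨fun hw => ?_, fun hw => ?_⟩)
  · obtain ⟨z, rfl⟩ := exists_kerLift_eq_of_mem hd p hw
    exact (h z).1 hw
  · obtain ⟨z, rfl⟩ := exists_kerLift_eq_of_mem hd q hw
    exact (h z).2 hw

theorem decoration_ofDecoration (hd : ∀ a, ∀ w ∈ d a, ∃ b, d b = w)
    (p : (ofDecoration d root hacc).carrier) :
    (ofDecoration d root hacc).decoration ofDecoration_wf p = Setoid.kerLift d p := by
  induction p using ofDecoration_wf.induction with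
  | _ p ih =>
    ext w
    rw [mem_decoration]
    constructor
    · rintro ⟨q, hq, rfl⟩
      rw [ih q hq]
      exact hq
    · intro hw
      obtain ⟨q, rfl⟩ := exists_kerLift_eq_of_mem hd p hw
      exact ⟨q, hw, ih q hw⟩

end OfDecoration

section Pair

variable {X Y : APG.{u}} (hXw : X.WF) (hYw : Y.WF)

noncomputable def pairDecoration : Option (X.carrier ⊕ Y.carrier) → ZFSet.{u}
  | none => {X.decoration hXw X.pt, Y.decoration hYw Y.pt}
  | some (.inl a) => X.decoration hXw a
  | some (.inr b) => Y.decoration hYw b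

theorem exists_pairDecoration_eq_of_mem :
    ∀ a, ∀ w ∈ pairDecoration hXw hYw a, ∃ b, pairDecoration hXw hYw b = w
  | none, w, hw => by
    rcases ZFSet.mem_pair.1 hw with rfl | rfl
    exacts [⟨some (.inl X.pt), rfl⟩, ⟨some (.inr Y.pt), rfl⟩]
  | some (.inl a), w, hw => by
    obtain ⟨b, -, rfl⟩ := (mem_decoration hXw).1 hw
    exact ⟨some (.inl b), rfl⟩
  | some (.inr a), w, hw => by
    obtain ⟨b, -, rfl⟩ := (mem_decoration hYw).1 hw
    exact ⟨some (.inr b), rfl⟩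

theorem reflTransGen_pairDecoration_none :
    ∀ a, ReflTransGen (fun a b => pairDecoration hXw hYw a ∈ pairDecoration hXw hYw b) a none
  | none => .refl
  | some (.inl a) =>
    .tail ((X.acc a).lift (fun a => some (Sum.inl a)) fun _ _ h =>
        decoration_mem_decoration hXw h)
      (ZFSet.mem_pair.2 (.inl rfl))
  | some (.inr b) =>
    .tail ((Y.acc b).lift (fun b => some (Sum.inr b)) fun _ _ h =>
        decoration_mem_decoration hYw h)
      (ZFSet.mem_pair.2 (.inr rfl))

end Pair

end APG

/-- Pairing for well-founded extensional APGs. -/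
theorem apg_pairing (X Y : APG.{u}) (hXw : X.WF) (hXe : X.Ext)
    (hYw : Y.WF) (hYe : Y.Ext) :
    ∃ Z : APG.{u}, Z.WF ∧ Z.Ext ∧
      ∀ W : APG.{u}, W.WF → W.Ext → (APG.Mem W Z ↔ APG.Iso W X ∨ APG.Iso W Y) := by
  let Z := APG.ofDecoration (APG.pairDecoration hXw hYw) none
    (APG.reflTransGen_pairDecoration_none hXw hYw)
  have hd := APG.exists_pairDecoration_eq_of_mem hXw hYw
  have hZe : Z.Ext := APG.ofDecoration_ext hd
  refine ⟨Z, APG.ofDecoration_wf, hZe, fun W hWw hWe => ?_⟩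
  rw [APG.mem_iff_decoration_mem hWw hWe APG.ofDecoration_wf hZe,
    APG.decoration_ofDecoration hd, APG.iso_iff_decoration_pt_eq hWw hWe hXw hXe,
    APG.iso_iff_decoration_pt_eq hWw hWe hYw hYe]
  exact ZFSet.mem_pair
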